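/- Let (S, μ) be a σ-finite measure space, F ∈ L¹(S², μ²), and let f₁, f₂ : S → [0,∞) be bounded measurable functions. Then the cut norm of the function (x,y) ↦ f₁(x) f₂(y) F(x,y) is at most ‖f₁‖_∞ · ‖f₂‖_∞ · ‖F‖_□. -/

import Mathlib

open MeasureTheory Filter Topology

noncomputable def cutNorm {S : Type*} [MeasurableSpace S] (μ : Measure S)
    (F : S × S → ℝ) : ℝ :=
  ⨆ TU : {TU : Set S × Set S // MeasurableSet TU.1 ∧ MeasurableSet TU.2},
    |∫ p in TU.1.1 ×ˢ TU.1.2, F p ∂(μ.prod μ)|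

/-!
Since `F` is integrable, `(g, h) ↦ ∫∫ g(x) h(y) F(x, y)` can be bounded one variable at a time:
for `G(x) = ∫ h(y) F(x, y) dy` and `0 ≤ g ≤ C₁`, the integral `∫ g G` is at most `C₁` times the
integral of `G` over the set `T = {G > 0}`. Doing the same in `y` with `T` fixed bounds
`∫∫ g h F` by `C₁ C₂ ∫_{T × U} F ≤ C₁ C₂ ‖F‖_□`. Applied to `f₁ 1_T` and `f₂ 1_U` and to `±F`,
this bounds every `|∫_{T × U} f₁ f₂ F|`.
-/

theorem Set.indicator_mem_Icc {α M : Type*} [Zero M] [Preorder M] {f : α → M} {C : M}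
    (s : Set α) (hC : 0 ≤ C) (hf : ∀ x, f x ∈ Set.Icc 0 C) (x : α) :
    s.indicator f x ∈ Set.Icc 0 C := by
  by_cases hx : x ∈ s
  · simpa [hx] using hf x
  · simpa [hx] using hC

section BoundedWeights

variable {α β : Type*} [MeasurableSpace α] [MeasurableSpace β] {μ : Measure α} {ν : Measure β}
  {g : α → ℝ} {C : ℝ}

theorem setIntegral_prod_mul_eq_integral_indicator {F : α × β → ℝ} {f₁ : α → ℝ} {f₂ : β → ℝ}
    {T : Set α} {U : Set β} (hT : MeasurableSet T) (hU : MeasurableSet U) :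
    ∫ p in T ×ˢ U, f₁ p.1 * f₂ p.2 * F p ∂(μ.prod ν) =
      ∫ p, T.indicator f₁ p.1 * U.indicator f₂ p.2 * F p ∂(μ.prod ν) := by
  rw [← integral_indicator (hT.prod hU)]
  congr 1 with ⟨x, y⟩
  by_cases hx : x ∈ T <;> by_cases hy : y ∈ U <;> simp [Set.indicator, hx, hy]

theorem integrable_mul_of_mem_Icc {G : α → ℝ} (hG : Integrable G μ)
    (hg : AEStronglyMeasurable g μ) (hgC : ∀ x, g x ∈ Set.Icc 0 C) :
    Integrable (fun x => g x * G x) μ :=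
  hG.bdd_mul hg (ae_of_all _ fun x => by
    rw [Real.norm_of_nonneg (hgC x).1]; exact (hgC x).2)

theorem exists_measurableSet_integral_mul_le {G : α → ℝ} (hG : Integrable G μ)
    (hg : AEStronglyMeasurable g μ) (hgC : ∀ x, g x ∈ Set.Icc 0 C) :
    ∃ T, MeasurableSet T ∧ ∫ x, g x * G x ∂μ ≤ C * ∫ x in T, G x ∂μ := by
  obtain ⟨G', hG'm, hGG'⟩ := hG.aestronglyMeasurable
  have hT : MeasurableSet {x | 0 < G' x} := measurableSet_lt measurable_const hG'm.measurable
  refine ⟨_, hT, ?_⟩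
  rw [← integral_const_mul, ← integral_indicator hT]
  refine integral_mono_ae (integrable_mul_of_mem_Icc hG hg hgC) ((hG.const_mul C).indicator hT) ?_
  filter_upwards [hGG'] with x hx
  obtain ⟨hg0, hgC⟩ := hgC x
  simp only [Set.indicator_apply, Set.mem_ofPred_eq, ← hx]
  split_ifs with hGx
  · exact mul_le_mul_of_nonneg_right hgC hGx.le
  · exact mul_nonpos_of_nonneg_of_nonpos hg0 (not_lt.1 hGx)

variable [SFinite μ] [SFinite ν]

theorem integrable_restrict_prod {F : α × β → ℝ} (hF : Integrable F (μ.prod ν)) (T : Set α) :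
    Integrable F ((μ.restrict T).prod ν) := by
  rw [Measure.restrict_prod_eq_prod_univ]
  exact hF.restrict

theorem exists_measurableSet_integral_mul_fst_le {F : α × β → ℝ} (hF : Integrable F (μ.prod ν))
    (hg : AEStronglyMeasurable g μ) (hgC : ∀ x, g x ∈ Set.Icc 0 C) :
    ∃ T, MeasurableSet T ∧
      ∫ p, g p.1 * F p ∂(μ.prod ν) ≤ C * ∫ p, F p ∂((μ.restrict T).prod ν) := by
  have hgF : ∫ p, g p.1 * F p ∂(μ.prod ν) = ∫ x, g x * ∫ y, F (x, y) ∂ν ∂μ := by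
    rw [integral_prod _ (integrable_mul_of_mem_Icc hF hg.comp_fst fun p => hgC p.1)]
    simp_rw [integral_const_mul]
  obtain ⟨T, hT, hle⟩ := exists_measurableSet_integral_mul_le hF.integral_prod_left hg hgC
  refine ⟨T, hT, ?_⟩
  rwa [hgF, integral_prod _ (integrable_restrict_prod hF T)]

theorem exists_measurableSet_integral_mul_snd_le {F : α × β → ℝ} {h : β → ℝ}
    (hF : Integrable F (μ.prod ν)) (hh : AEStronglyMeasurable h ν)
    (hhC : ∀ y, h y ∈ Set.Icc 0 C) :
    ∃ U, MeasurableSet U ∧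
      ∫ p, h p.2 * F p ∂(μ.prod ν) ≤ C * ∫ p, F p ∂(μ.prod (ν.restrict U)) := by
  obtain ⟨U, hU, hle⟩ := exists_measurableSet_integral_mul_fst_le (μ := ν) (ν := μ) hF.swap hh hhC
  refine ⟨U, hU, ?_⟩
  rwa [← integral_prod_swap, ← integral_prod_swap (fun p => F p)]

end BoundedWeights

section CutNorm

variable {S : Type*} [MeasurableSpace S] {μ : Measure S} {F : S × S → ℝ}

theorem cutNorm_le {c : ℝ}
    (h : ∀ T U, MeasurableSet T → MeasurableSet U → |∫ p in T ×ˢ U, F p ∂(μ.prod μ)| ≤ c) :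
    cutNorm μ F ≤ c :=
  have : Nonempty {TU : Set S × Set S // MeasurableSet TU.1 ∧ MeasurableSet TU.2} :=
    ⟨⟨(∅, ∅), .empty, .empty⟩⟩
  ciSup_le fun TU => h _ _ TU.2.1 TU.2.2

theorem abs_setIntegral_le_cutNorm (hF : Integrable F (μ.prod μ)) {T U : Set S}
    (hT : MeasurableSet T) (hU : MeasurableSet U) :
    |∫ p in T ×ˢ U, F p ∂(μ.prod μ)| ≤ cutNorm μ F := by
  refine le_ciSup (f := fun TU : {TU : Set S × Set S // MeasurableSet TU.1 ∧ MeasurableSet TU.2} =>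
    |∫ p in TU.1.1 ×ˢ TU.1.2, F p ∂(μ.prod μ)|) ⟨∫ p, |F p| ∂(μ.prod μ), ?_⟩ ⟨(T, U), hT, hU⟩
  rintro _ ⟨TU, rfl⟩
  exact (abs_integral_le_integral_abs).trans
    (setIntegral_le_integral hF.abs (ae_of_all _ fun _ => abs_nonneg _))

theorem cutNorm_neg : cutNorm μ (fun p => -F p) = cutNorm μ F := by
  simp only [cutNorm, integral_neg, abs_neg]

variable [SFinite μ] {g h : S → ℝ} {C₁ C₂ : ℝ}

theorem integral_mul_mul_le_cutNorm (hF : Integrable F (μ.prod μ))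
    (hg : AEStronglyMeasurable g μ) (hh : AEStronglyMeasurable h μ) (hC₁ : 0 ≤ C₁) (hC₂ : 0 ≤ C₂)
    (hgC : ∀ x, g x ∈ Set.Icc 0 C₁) (hhC : ∀ y, h y ∈ Set.Icc 0 C₂) :
    ∫ p, g p.1 * h p.2 * F p ∂(μ.prod μ) ≤ C₁ * C₂ * cutNorm μ F := by
  obtain ⟨T, hT, hleT⟩ := exists_measurableSet_integral_mul_fst_le
    (integrable_mul_of_mem_Icc hF hh.comp_snd fun p => hhC p.2) hg hgC
  obtain ⟨U, hU, hleU⟩ :=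
    exists_measurableSet_integral_mul_snd_le (integrable_restrict_prod hF T) hh hhC
  calc ∫ p, g p.1 * h p.2 * F p ∂(μ.prod μ) = ∫ p, g p.1 * (h p.2 * F p) ∂(μ.prod μ) := by
        simp_rw [mul_assoc]
    _ ≤ C₁ * (C₂ * ∫ p in T ×ˢ U, F p ∂(μ.prod μ)) := by
        rw [← Measure.prod_restrict]
        exact hleT.trans (mul_le_mul_of_nonneg_left hleU hC₁)
    _ ≤ C₁ * (C₂ * cutNorm μ F) := by
        gcongr
        exact (le_abs_self _).trans (abs_setIntegral_le_cutNorm hF hT hU)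
    _ = C₁ * C₂ * cutNorm μ F := (mul_assoc _ _ _).symm

theorem abs_integral_mul_mul_le_cutNorm (hF : Integrable F (μ.prod μ))
    (hg : AEStronglyMeasurable g μ) (hh : AEStronglyMeasurable h μ) (hC₁ : 0 ≤ C₁) (hC₂ : 0 ≤ C₂)
    (hgC : ∀ x, g x ∈ Set.Icc 0 C₁) (hhC : ∀ y, h y ∈ Set.Icc 0 C₂) :
    |∫ p, g p.1 * h p.2 * F p ∂(μ.prod μ)| ≤ C₁ * C₂ * cutNorm μ F := by
  have hneg := integral_mul_mul_le_cutNorm (F := fun p => -F p) hF.neg hg hh hC₁ hC₂ hgC hhC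
  simp only [mul_neg, integral_neg, cutNorm_neg] at hneg
  exact abs_le.2 ⟨neg_le.1 hneg, integral_mul_mul_le_cutNorm hF hg hh hC₁ hC₂ hgC hhC⟩

end CutNorm

theorem cutNorm_mul_le {S : Type*} [MeasurableSpace S] (μ : Measure S) [SigmaFinite μ]
    (F : S × S → ℝ) (hF : Integrable F (μ.prod μ))
    (f₁ f₂ : S → ℝ) (hf₁ : Measurable f₁) (hf₂ : Measurable f₂)
    (C₁ C₂ : ℝ)
    (hb₁ : ∀ x, f₁ x ∈ Set.Icc 0 C₁) (hb₂ : ∀ x, f₂ x ∈ Set.Icc 0 C₂) :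
    cutNorm μ (fun p => f₁ p.1 * f₂ p.2 * F p) ≤ C₁ * C₂ * cutNorm μ F := by
  rcases isEmpty_or_nonempty S with hS | ⟨⟨x₀⟩⟩
  · simp [cutNorm, μ.eq_zero_of_isEmpty]
  have hC₁ : 0 ≤ C₁ := (hb₁ x₀).1.trans (hb₁ x₀).2
  have hC₂ : 0 ≤ C₂ := (hb₂ x₀).1.trans (hb₂ x₀).2
  refine cutNorm_le fun T U hT hU => ?_
  rw [setIntegral_prod_mul_eq_integral_indicator hT hU]
  exact abs_integral_mul_mul_le_cutNorm hF (hf₁.indicator hT).aestronglyMeasurable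
    (hf₂.indicator hU).aestronglyMeasurable hC₁ hC₂
    (T.indicator_mem_Icc hC₁ hb₁) (U.indicator_mem_Icc hC₂ hb₂)
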